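/- Let P_I = {α ∈ ℝ^6 : α_r ≥ 0 for all r, ∑_r α_r = 1} (the standard 5-simplex), P_{II,t} as defined, and P_{III,(r,s,t)} = {α : α_a + α_b ≤ 0 for a,b ∈ {r,s,t}, -(α_r+α_s+α_t) ≤ α_a ≤ 1+(α_r+α_s+α_t) for a ∉ {r,s,t}, ∑ α_a = 1}. Then the union of P_I, the six polytopes P_{II,t}, and the twenty polytopes P_{III,(r,s,t)} equals the polytope P^{(0)} = {α : ∑α_r = 1, α_r ≥ -1/2, α_r - α_s ≤ 1, α_r + α_s ≤ 1}, and the interiors of any two distinct tiles are disjoint. -/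
import Mathlib

/-- Sum over `Fin 6` as six pairwise-distinct terms. -/
lemma sum_six {β : Fin 6 → ℝ} {a b c d e f : Fin 6}
    (hab : a ≠ b) (hac : a ≠ c) (had : a ≠ d) (hae : a ≠ e) (haf : a ≠ f)
    (hbc : b ≠ c) (hbd : b ≠ d) (hbe : b ≠ e) (hbf : b ≠ f)
    (hcd : c ≠ d) (hce : c ≠ e) (hcf : c ≠ f)
    (hde : d ≠ e) (hdf : d ≠ f) (hef : e ≠ f) :
    (∑ x, β x) = β a + β b + β c + β d + β e + β f := by
  have huniv : ({a, b, c, d, e, f} : Finset (Fin 6)) = Finset.univ := by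
    apply Finset.eq_univ_of_card
    repeat rw [Finset.card_insert_of_notMem (by simp [*])]
    simp
  rw [← huniv]
  repeat rw [Finset.sum_insert (by simp [*])]
  rw [Finset.sum_singleton]
  ring

lemma exists_ne5 (r s t x y : Fin 6) : ∃ z, z ≠ r ∧ z ≠ s ∧ z ≠ t ∧ z ≠ x ∧ z ≠ y := by
  have h1 : ({r, s, t, x, y} : Finset (Fin 6)).card < 6 := by
    refine lt_of_le_of_lt ?_ (by norm_num : (5:ℕ) < 6)
    refine (Finset.card_insert_le _ _).trans (Nat.succ_le_succ ?_)
    refine (Finset.card_insert_le _ _).trans (Nat.succ_le_succ ?_)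
    refine (Finset.card_insert_le _ _).trans (Nat.succ_le_succ ?_)
    refine (Finset.card_insert_le _ _).trans (Nat.succ_le_succ ?_)
    exact Finset.card_singleton y ▸ le_refl 1
  by_contra hc
  push_neg at hc
  have : ({r, s, t, x, y} : Finset (Fin 6)) = Finset.univ := by
    apply Finset.eq_univ_iff_forall.2
    intro z
    simp only [Finset.mem_insert, Finset.mem_singleton]
    by_cases e1 : z = r; · tauto
    by_cases e2 : z = s; · tauto
    by_cases e3 : z = t; · tauto
    by_cases e4 : z = x; · tauto
    exact Or.inr (Or.inr (Or.inr (Or.inr (hc z e1 e2 e3 e4))))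
  rw [this] at h1
  simp at h1

/-- Given two distinct members of a 3-element set, there is a third member. -/
lemma third_elem {r s t y z : Fin 6} (hrs : r ≠ s) (hrt : r ≠ t) (hst : s ≠ t)
    (hy : y ∈ ({r, s, t} : Set (Fin 6))) (hz : z ∈ ({r, s, t} : Set (Fin 6))) (hyz : y ≠ z) :
    ∃ c, c ∈ ({r, s, t} : Set (Fin 6)) ∧ c ≠ y ∧ c ≠ z := by
  simp only [Set.mem_insert_iff, Set.mem_singleton_iff] at hy hz
  rcases hy with rfl | rfl | rfl <;> rcases hz with rfl | rfl | rfl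
  · exact absurd rfl hyz
  · exact ⟨t, by simp, hrt.symm, hst.symm⟩
  · exact ⟨s, by simp, hrs.symm, hst⟩
  · exact ⟨t, by simp, hst.symm, hrt.symm⟩
  · exact absurd rfl hyz
  · exact ⟨r, by simp, hrs, hrt⟩
  · exact ⟨s, by simp, hst, hrs.symm⟩
  · exact ⟨r, by simp, hrt, hrs⟩
  · exact absurd rfl hyz

lemma sorted_eq {r s t r' s' t' : Fin 6} (h1 : r < s) (h2 : s < t)
    (h1' : r' < s') (h2' : s' < t')
    (hr' : r' = r ∨ r' = s ∨ r' = t) (hs' : s' = r ∨ s' = s ∨ s' = t)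
    (ht' : t' = r ∨ t' = s ∨ t' = t) : r = r' ∧ s = s' ∧ t = t' := by
  rw [Fin.lt_def] at h1 h2 h1' h2'
  simp only [Fin.ext_iff] at hr' hs' ht' ⊢
  rcases hr' with h | h | h <;> rcases hs' with h' | h' | h' <;>
    rcases ht' with h'' | h'' | h'' <;> omega

/-- Membership in `P⁰ = {α : ∑ α_r = 1, α_r ≥ -1/2, α_r - α_s ≤ 1, α_r + α_s ≤ 1}`. -/
def memP0 (α : Fin 6 → ℝ) : Prop :=
  (∑ r, α r) = 1 ∧ (∀ r, -(1 / 2) ≤ α r) ∧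
  (∀ r s, r ≠ s → α r - α s ≤ 1) ∧ (∀ r s, r ≠ s → α r + α s ≤ 1)

/-- Membership in `P_I = {α : α_r ≥ 0, ∑ α_r = 1}` (the standard 5-simplex). -/
def memPI (α : Fin 6 → ℝ) : Prop := (∑ r, α r) = 1 ∧ ∀ r, 0 ≤ α r

/-- Relative interior of `P_I` (all non-hyperplane inequalities strict). -/
def intPI (α : Fin 6 → ℝ) : Prop := (∑ r, α r) = 1 ∧ ∀ r, 0 < α r

/-- Membership in `P_{II,t}`. -/
def memPII (t : Fin 6) (α : Fin 6 → ℝ) : Prop :=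
  (∑ r, α r) = 1 ∧ -(1 / 2) ≤ α t ∧ α t ≤ 0 ∧
  (∀ r, r ≠ t → α t ≤ α r ∧ α r ≤ 1 + α t) ∧
  (∀ r s, r ≠ t → s ≠ t → r ≠ s → 0 ≤ α r + α s ∧ α r + α s ≤ 1)

/-- Relative interior of `P_{II,t}`. -/
def intPII (t : Fin 6) (α : Fin 6 → ℝ) : Prop :=
  (∑ r, α r) = 1 ∧ -(1 / 2) < α t ∧ α t < 0 ∧
  (∀ r, r ≠ t → α t < α r ∧ α r < 1 + α t) ∧
  (∀ r s, r ≠ t → s ≠ t → r ≠ s → 0 < α r + α s ∧ α r + α s < 1)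

/-- Membership in `P_{III,(r,s,t)} = {α : α_a + α_b ≤ 0 for distinct a,b ∈ {r,s,t},
-(α_r+α_s+α_t) ≤ α_a ≤ 1+(α_r+α_s+α_t) for a ∉ {r,s,t}, ∑ α_a = 1}`. -/
def memPIII (r s t : Fin 6) (α : Fin 6 → ℝ) : Prop :=
  (∑ a, α a) = 1 ∧
  (∀ a b : Fin 6, a ∈ ({r, s, t} : Set (Fin 6)) → b ∈ ({r, s, t} : Set (Fin 6)) →
      a ≠ b → α a + α b ≤ 0) ∧
  (∀ a : Fin 6, a ∉ ({r, s, t} : Set (Fin 6)) →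
      -(α r + α s + α t) ≤ α a ∧ α a ≤ 1 + (α r + α s + α t))

/-- Relative interior of `P_{III,(r,s,t)}`. -/
def intPIII (r s t : Fin 6) (α : Fin 6 → ℝ) : Prop :=
  (∑ a, α a) = 1 ∧
  (∀ a b : Fin 6, a ∈ ({r, s, t} : Set (Fin 6)) → b ∈ ({r, s, t} : Set (Fin 6)) →
      a ≠ b → α a + α b < 0) ∧
  (∀ a : Fin 6, a ∉ ({r, s, t} : Set (Fin 6)) →
      -(α r + α s + α t) < α a ∧ α a < 1 + (α r + α s + α t))



section Swaps
variable {α : Fin 6 → ℝ} {r s t : Fin 6}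

lemma memPIII_swap12 (h : memPIII r s t α) : memPIII s r t α := by
  obtain ⟨h1, h2, h3⟩ := h
  refine ⟨h1, ?_, ?_⟩
  · intro a b ha hb hab
    rw [Set.insert_comm] at ha hb
    exact h2 a b ha hb hab
  · intro a ha
    rw [Set.insert_comm] at ha
    have := h3 a ha
    constructor <;> linarith [this.1, this.2]

lemma memPIII_swap23 (h : memPIII r s t α) : memPIII r t s α := by
  obtain ⟨h1, h2, h3⟩ := h
  refine ⟨h1, ?_, ?_⟩
  · intro a b ha hb hab
    rw [Set.pair_comm t s] at ha hb
    exact h2 a b ha hb hab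
  · intro a ha
    rw [Set.pair_comm t s] at ha
    have := h3 a ha
    constructor <;> linarith [this.1, this.2]

lemma intPIII_swap12 (h : intPIII r s t α) : intPIII s r t α := by
  obtain ⟨h1, h2, h3⟩ := h
  refine ⟨h1, ?_, ?_⟩
  · intro a b ha hb hab
    rw [Set.insert_comm] at ha hb
    exact h2 a b ha hb hab
  · intro a ha
    rw [Set.insert_comm] at ha
    have := h3 a ha
    constructor <;> linarith [this.1, this.2]

lemma intPIII_swap23 (h : intPIII r s t α) : intPIII r t s α := by
  obtain ⟨h1, h2, h3⟩ := h
  refine ⟨h1, ?_, ?_⟩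
  · intro a b ha hb hab
    rw [Set.pair_comm t s] at ha hb
    exact h2 a b ha hb hab
  · intro a ha
    rw [Set.pair_comm t s] at ha
    have := h3 a ha
    constructor <;> linarith [this.1, this.2]

lemma memPIII_sort (hrs : r ≠ s) (hrt : r ≠ t) (hst : s ≠ t) (h : memPIII r s t α) :
    ∃ a b c : Fin 6, a < b ∧ b < c ∧ memPIII a b c α := by
  rcases lt_or_gt_of_ne hrs with h1 | h1 <;> rcases lt_or_gt_of_ne hst with h2 | h2 <;>
    rcases lt_or_gt_of_ne hrt with h3 | h3
  · exact ⟨r, s, t, h1, h2, h⟩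
  · exact absurd (h1.trans h2) (asymm h3)
  · exact ⟨r, t, s, h3, h2, memPIII_swap23 h⟩
  · exact ⟨t, r, s, h3, h1, memPIII_swap12 (memPIII_swap23 h)⟩
  · exact ⟨s, r, t, h1, h3, memPIII_swap12 h⟩
  · exact ⟨s, t, r, h2, h3, memPIII_swap23 (memPIII_swap12 h)⟩
  · exact absurd (h2.trans h1) (asymm h3)
  · exact ⟨t, s, r, h2, h1, memPIII_swap12 (memPIII_swap23 (memPIII_swap12 h))⟩

end Swaps

lemma PI_subset {α : Fin 6 → ℝ} (h : memPI α) : memP0 α := by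
  obtain ⟨hsum, hpos⟩ := h
  have pair : ∀ x y : Fin 6, x ≠ y → α x + α y ≤ 1 := by
    intro x y hxy
    have hle : ∑ z ∈ ({x, y} : Finset (Fin 6)), α z ≤ ∑ z, α z :=
      Finset.sum_le_sum_of_subset_of_nonneg (Finset.subset_univ _) fun i _ _ => hpos i
    rw [Finset.sum_pair hxy, hsum] at hle
    exact hle
  exact ⟨hsum, fun x => by linarith [hpos x],
    fun x y hxy => by linarith [pair x y hxy, hpos y], pair⟩

lemma PII_subset {α : Fin 6 → ℝ} {t : Fin 6} (h : memPII t α) : memP0 α := by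
  obtain ⟨hsum, hhalf, hneg, hmin, hpairs⟩ := h
  refine ⟨hsum, ?_, ?_, ?_⟩
  · intro x
    by_cases hx : x = t
    · rw [hx]; exact hhalf
    · linarith [(hmin x hx).1]
  · intro x y hxy
    by_cases hx : x = t
    · subst hx
      have hy : y ≠ x := fun hy => hxy hy.symm
      linarith [(hmin y hy).1]
    · by_cases hy : y = t
      · subst hy
        linarith [(hmin x hx).2]
      · linarith [(hmin x hx).2, (hmin y hy).1]
  · intro x y hxy
    by_cases hx : x = t
    · subst hx
      have hy : y ≠ x := fun hy => hxy hy.symm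
      linarith [(hmin y hy).2]
    · by_cases hy : y = t
      · subst hy
        linarith [(hmin x hx).2]
      · exact (hpairs x y hx hy hxy).2

/-- In `P⁰`, the outer bounds of `P_III` hold automatically for any distinct triple. -/
lemma outer_bd {α : Fin 6 → ℝ} {r s t a : Fin 6} (h : memP0 α)
    (hrs : r ≠ s) (hrt : r ≠ t) (hst : s ≠ t)
    (har : a ≠ r) (has : a ≠ s) (hat : a ≠ t) :
    -(α r + α s + α t) ≤ α a ∧ α a ≤ 1 + (α r + α s + α t) := by
  obtain ⟨hsum, hhalf, hdiff, hpair⟩ := h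
  obtain ⟨b, hbr, hbs, hbt, hba, -⟩ := exists_ne5 r s t a a
  obtain ⟨c, hcr, hcs, hct, hca, hcb⟩ := exists_ne5 r s t a b
  have h6 : (∑ x, α x) = α r + α s + α t + α a + α b + α c :=
    sum_six hrs hrt har.symm hbr.symm hcr.symm hst has.symm hbs.symm hcs.symm
      hat.symm hbt.symm hct.symm hba.symm hca.symm hcb.symm
  rw [hsum] at h6
  constructor
  · linarith [hpair b c hcb.symm]
  · linarith [hpair a b hba.symm, hpair a c hca.symm]

lemma PIII_subset {α : Fin 6 → ℝ} {r s t : Fin 6}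
    (hrs : r ≠ s) (hrt : r ≠ t) (hst : s ≠ t) (h : memPIII r s t α) : memP0 α := by
  obtain ⟨hsum, hin, hout⟩ := h
  have hr : r ∈ ({r, s, t} : Set (Fin 6)) := by simp
  have hs : s ∈ ({r, s, t} : Set (Fin 6)) := by simp
  have ht : t ∈ ({r, s, t} : Set (Fin 6)) := by simp
  obtain ⟨a, har, has, hat, -, -⟩ := exists_ne5 r s t r r
  obtain ⟨b, hbr, hbs, hbt, hba, -⟩ := exists_ne5 r s t a a
  obtain ⟨c, hcr, hcs, hct, hca, hcb⟩ := exists_ne5 r s t a b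
  have hamem : a ∉ ({r, s, t} : Set (Fin 6)) := by simp [har, has, hat]
  have hbmem : b ∉ ({r, s, t} : Set (Fin 6)) := by simp [hbr, hbs, hbt]
  have hcmem : c ∉ ({r, s, t} : Set (Fin 6)) := by simp [hcr, hcs, hct]
  have hA := hout a hamem
  have hB := hout b hbmem
  have hC := hout c hcmem
  have h6 : (∑ x, α x) = α r + α s + α t + α a + α b + α c :=
    sum_six hrs hrt har.symm hbr.symm hcr.symm hst has.symm hbs.symm hcs.symm
      hat.symm hbt.symm hct.symm hba.symm hca.symm hcb.symm
  rw [hsum] at h6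
  have hσle : α r + α s + α t ≤ 0 := by
    linarith [hin r s hr hs hrs, hin r t hr ht hrt, hin s t hs ht hst]
  have hσge : -(1/2 : ℝ) ≤ α r + α s + α t := by linarith [hA.2, hB.2, hC.2]
  have hIn : ∀ x, x ∈ ({r, s, t} : Set (Fin 6)) →
      α r + α s + α t ≤ α x ∧ α x ≤ -(α r + α s + α t) := by
    intro x hx
    rcases hx with rfl | hx
    · constructor <;>
        linarith [hin x s hr hs hrs, hin x t hr ht hrt, hin s t hs ht hst]
    rcases hx with rfl | hx
    · constructor <;>
        linarith [hin r x hr hs hrs, hin x t hs ht hst, hin r t hr ht hrt]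
    rcases hx with rfl
    constructor <;>
      linarith [hin r x hr ht hrt, hin s x hs ht hst, hin r s hr hs hrs]
  refine ⟨hsum, ?_, ?_, ?_⟩
  · intro x
    by_cases hx : x ∈ ({r, s, t} : Set (Fin 6))
    · linarith [(hIn x hx).1]
    · linarith [(hout x hx).1]
  · intro x y hxy
    by_cases hx : x ∈ ({r, s, t} : Set (Fin 6)) <;>
      by_cases hy : y ∈ ({r, s, t} : Set (Fin 6))
    · linarith [(hIn x hx).2, (hIn y hy).1]
    · linarith [(hIn x hx).2, (hout y hy).1]
    · linarith [(hout x hx).2, (hIn y hy).1]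
    · linarith [(hout x hx).2, (hout y hy).1]
  · intro x y hxy
    by_cases hx : x ∈ ({r, s, t} : Set (Fin 6)) <;>
      by_cases hy : y ∈ ({r, s, t} : Set (Fin 6))
    · linarith [hin x y hx hy hxy]
    · linarith [(hIn x hx).2, (hout y hy).2]
    · linarith [(hout x hx).2, (hIn y hy).2]
    · -- both outside: use the third outside coordinate
      simp only [Set.mem_insert_iff, Set.mem_singleton_iff, not_or] at hx hy
      obtain ⟨z, hzr, hzs, hzt, hzx, hzy⟩ := exists_ne5 r s t x y
      have hzmem : z ∉ ({r, s, t} : Set (Fin 6)) := by simp [hzr, hzs, hzt]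
      have h6' : (∑ w, α w) = α r + α s + α t + α x + α y + α z :=
        sum_six hrs hrt (Ne.symm hx.1) (Ne.symm hy.1) hzr.symm hst (Ne.symm hx.2.1)
          (Ne.symm hy.2.1) hzs.symm (Ne.symm hx.2.2) (Ne.symm hy.2.2) hzt.symm
          hxy hzx.symm hzy.symm
      rw [hsum] at h6'
      linarith [(hout z hzmem).1]

lemma P0_cover {α : Fin 6 → ℝ} (h : memP0 α) :
    memPI α ∨ (∃ t, memPII t α) ∨
      ∃ r s t : Fin 6, r < s ∧ s < t ∧ memPIII r s t α := by
  obtain ⟨t, -, hmin⟩ := Finset.exists_min_image Finset.univ α ⟨0, Finset.mem_univ 0⟩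
  by_cases hI : ∀ x, 0 ≤ α x
  · exact Or.inl ⟨h.1, hI⟩
  push_neg at hI
  obtain ⟨w, hw⟩ := hI
  have hneg : α t < 0 := lt_of_le_of_lt (hmin w (Finset.mem_univ w)) hw
  by_cases hII : ∀ x y, x ≠ t → y ≠ t → x ≠ y → 0 ≤ α x + α y
  · refine Or.inr (Or.inl ⟨t, h.1, h.2.1 t, hneg.le, ?_, ?_⟩)
    · intro x hx
      refine ⟨hmin x (Finset.mem_univ x), ?_⟩
      have := h.2.2.1 x t hx
      linarith
    · intro x y hx hy hxy
      exact ⟨hII x y hx hy hxy, h.2.2.2 x y hxy⟩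
  push_neg at hII
  obtain ⟨x, y, hx, hy, hxy, hsn⟩ := hII
  have htx : t ≠ x := fun e => hx e.symm
  have hty : t ≠ y := fun e => hy e.symm
  have hm : memPIII t x y α := by
    refine ⟨h.1, ?_, ?_⟩
    · intro a b ha hb hab
      have hax := hmin x (Finset.mem_univ x)
      have hay := hmin y (Finset.mem_univ y)
      simp only [Set.mem_insert_iff, Set.mem_singleton_iff] at ha hb
      rcases ha with rfl | rfl | rfl <;> rcases hb with rfl | rfl | rfl <;>
        first
          | exact absurd rfl hab
          | linarith
    · intro a ha
      simp only [Set.mem_insert_iff, Set.mem_singleton_iff, not_or] at ha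
      exact outer_bd h htx hty hxy ha.1 ha.2.1 ha.2.2
  obtain ⟨a, b, c, h1, h2, hm'⟩ := memPIII_sort htx hty hxy hm
  exact Or.inr (Or.inr ⟨a, b, c, h1, h2, hm'⟩)

/-- Core disjointness for two `P_III` interiors: every vertex of the second triple
lies in the first triple. -/
lemma PIII_core {α : Fin 6 → ℝ} {r s t x y z : Fin 6}
    (hrs : r ≠ s) (hrt : r ≠ t) (hst : s ≠ t)
    (hxy : x ≠ y) (hxz : x ≠ z) (hyz : y ≠ z)
    (h : intPIII r s t α) (h' : intPIII x y z α)
    (hxT : x ∉ ({r, s, t} : Set (Fin 6))) : False := by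
  obtain ⟨hs1, hin, hout⟩ := h
  obtain ⟨hs1', hin', hout'⟩ := h'
  have hr : r ∈ ({r, s, t} : Set (Fin 6)) := by simp
  have hs : s ∈ ({r, s, t} : Set (Fin 6)) := by simp
  have ht : t ∈ ({r, s, t} : Set (Fin 6)) := by simp
  have hx' : x ∈ ({x, y, z} : Set (Fin 6)) := by simp
  have hy' : y ∈ ({x, y, z} : Set (Fin 6)) := by simp
  have hz' : z ∈ ({x, y, z} : Set (Fin 6)) := by simp
  have hσ : α r + α s + α t < 0 := by
    linarith [hin r s hr hs hrs, hin r t hr ht hrt, hin s t hs ht hst]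
  have hxpos : 0 < α x := by linarith [(hout x hxT).1]
  -- the other two vertices of the second triple are negative, hence inside {r,s,t}
  have hyn : α y < 0 := by linarith [hin' x y hx' hy' hxy]
  have hzn : α z < 0 := by linarith [hin' x z hx' hz' hxz]
  have hyT : y ∈ ({r, s, t} : Set (Fin 6)) := by
    by_contra hc
    linarith [(hout y hc).1]
  have hzT : z ∈ ({r, s, t} : Set (Fin 6)) := by
    by_contra hc
    linarith [(hout z hc).1]
  obtain ⟨c, hcT, hcy, hcz⟩ := third_elem hrs hrt hst hyT hzT hyz
  have hcx : c ≠ x := fun e => hxT (e ▸ hcT)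
  have hcT' : c ∉ ({x, y, z} : Set (Fin 6)) := by simp [hcx, hcy, hcz]
  have hD := (hout' c hcT').1
  have hA := hin y c hyT hcT hcy.symm
  have hB := hin' z x hz' hx' (fun e => hxz e.symm)
  linarith

/-- The polytopes `P_I`, the six `P_{II,t}` and the twenty `P_{III,(r,s,t)}`
(for `r < s < t`) tile `P⁰`: their union is `P⁰`, and the (relative) interiors of any
two distinct tiles are disjoint. -/
theorem tiling_of_P0 :
    (∀ α : Fin 6 → ℝ,
        memP0 α ↔ (memPI α ∨ (∃ t, memPII t α) ∨
          ∃ r s t : Fin 6, r < s ∧ s < t ∧ memPIII r s t α)) ∧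
    (∀ α : Fin 6 → ℝ, ∀ t : Fin 6, ¬(intPI α ∧ intPII t α)) ∧
    (∀ α : Fin 6 → ℝ, ∀ r s t : Fin 6, r < s → s < t → ¬(intPI α ∧ intPIII r s t α)) ∧
    (∀ α : Fin 6 → ℝ, ∀ t t' : Fin 6, t ≠ t' → ¬(intPII t α ∧ intPII t' α)) ∧
    (∀ α : Fin 6 → ℝ, ∀ t r s u : Fin 6, r < s → s < u →
        ¬(intPII t α ∧ intPIII r s u α)) ∧
    (∀ α : Fin 6 → ℝ, ∀ r s t r' s' t' : Fin 6, r < s → s < t → r' < s' → s' < t' →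
        (r, s, t) ≠ (r', s', t') → ¬(intPIII r s t α ∧ intPIII r' s' t' α)) := by
  refine ⟨?_, ?_, ?_, ?_, ?_, ?_⟩
  · intro α
    constructor
    · exact P0_cover
    · rintro (h | ⟨t, h⟩ | ⟨r, s, t, h1, h2, h⟩)
      · exact PI_subset h
      · exact PII_subset h
      · exact PIII_subset (ne_of_lt h1) (ne_of_lt (h1.trans h2)) (ne_of_lt h2) h
  · rintro α t ⟨h1, h2⟩
    linarith [h1.2 t, h2.2.2.1]
  · rintro α r s t hrs hst ⟨h1, h2⟩
    have := h2.2.1 r s (by simp) (by simp) (ne_of_lt hrs)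
    linarith [h1.2 r, h1.2 s]
  · rintro α t t' hne ⟨h1, h2⟩
    have a1 := (h1.2.2.2.1 t' (Ne.symm hne)).1
    have a2 := (h2.2.2.2.1 t hne).1
    linarith
  · rintro α t r s u hrs hsu ⟨h1, h2⟩
    have hru : r < u := hrs.trans hsu
    by_cases e1 : t = r
    · subst e1
      have p1 := (h1.2.2.2.2 s u (ne_of_lt hrs).symm (ne_of_lt hru).symm (ne_of_lt hsu)).1
      have p2 := h2.2.1 s u (by simp) (by simp) (ne_of_lt hsu)
      linarith
    · by_cases e2 : t = s
      · subst e2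
        have p1 := (h1.2.2.2.2 r u (ne_of_lt hrs) (ne_of_lt hsu).symm (ne_of_lt hru)).1
        have p2 := h2.2.1 r u (by simp) (by simp) (ne_of_lt hru)
        linarith
      · have p1 := (h1.2.2.2.2 r s (fun e => e1 e.symm) (fun e => e2 e.symm)
          (ne_of_lt hrs)).1
        have p2 := h2.2.1 r s (by simp) (by simp) (ne_of_lt hrs)
        linarith
  · rintro α r s t r' s' t' h1 h2 h1' h2' hne ⟨h, h'⟩
    have hrs : r ≠ s := ne_of_lt h1
    have hrt : r ≠ t := ne_of_lt (h1.trans h2)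
    have hst : s ≠ t := ne_of_lt h2
    have hrs' : r' ≠ s' := ne_of_lt h1'
    have hrt' : r' ≠ t' := ne_of_lt (h1'.trans h2')
    have hst' : s' ≠ t' := ne_of_lt h2'
    by_cases m1 : r' ∈ ({r, s, t} : Set (Fin 6))
    · by_cases m2 : s' ∈ ({r, s, t} : Set (Fin 6))
      · by_cases m3 : t' ∈ ({r, s, t} : Set (Fin 6))
        · simp only [Set.mem_insert_iff, Set.mem_singleton_iff] at m1 m2 m3
          obtain ⟨e1, e2, e3⟩ := sorted_eq h1 h2 h1' h2' m1 m2 m3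
          exact hne (by rw [e1, e2, e3])
        · exact PIII_core hrs hrt hst hrt'.symm hst'.symm hrs' h
            (intPIII_swap12 (intPIII_swap23 h')) m3
      · exact PIII_core hrs hrt hst hrs'.symm hst' hrt' h (intPIII_swap12 h') m2
    · exact PIII_core hrs hrt hst hrs' hrt' hst' h h' m1
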